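/- arXiv:2007.11168 — 2 statements merged into one kernel-verified Lean document; each statement's English description precedes it below -/
import Mathlib

section
/- Let L be a p×p lower triangular matrix and write D(L,i) for the matrix that agrees with L on its i-th subdiagonal and is zero elsewhere. Then for Σ = LᵗL and each 0 ≤ i ≤ p−1, the i-th subdiagonal of Σ satisfies Σ^i = ∑_{j=0}^{p−i−1} (D(L,j)ᵗ D(L,j+i))^i, where A^i denotes the i-th subdiagonal of A. -/
open Matrix

/-- `D(L,i)`: the matrix agreeing with `L` on its `i`-th subdiagonal and zero elsewhere. -/
def subdiagPart (p : ℕ) (L : Matrix (Fin p) (Fin p) ℝ) (i : ℕ) :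
    Matrix (Fin p) (Fin p) ℝ :=
  Matrix.of fun a b => if a.1 = b.1 + i then L a b else 0

/-- For `L` lower triangular and `Σ = LᵗL`, the `i`-th subdiagonal of `Σ`
satisfies `Σ^i = ∑_{j=0}^{p−i−1} (D(L,j)ᵗ D(L,j+i))^i`, entrywise. -/
theorem subdiag_of_gram_decomposition (p : ℕ) (L : Matrix (Fin p) (Fin p) ℝ)
    (hL : ∀ a b : Fin p, a < b → L a b = 0) (i : ℕ) (hi : i < p) :
    ∀ (k : ℕ) (h : k + i < p),
      (Lᵀ * L) ⟨k + i, h⟩ ⟨k, by omega⟩ =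
        ∑ j ∈ Finset.range (p - i),
          ((subdiagPart p L j)ᵀ * subdiagPart p L (j + i)) ⟨k + i, h⟩ ⟨k, by omega⟩ := by
  intro k h
  simp only [Matrix.mul_apply, Matrix.transpose_apply, subdiagPart, Matrix.of_apply]
  rw [Finset.sum_comm]
  apply Finset.sum_congr rfl
  intro m _
  by_cases hm : k + i ≤ m.1
  · have hmp := m.2
    rw [Finset.sum_eq_single (m.1 - (k + i))]
    · rw [if_pos (by omega), if_pos (by omega)]
    · intro b hb hne
      rw [if_neg (by omega), zero_mul]
    · intro hnb
      exact absurd (Finset.mem_range.mpr (by omega)) hnb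
  · have h0 : L m ⟨k + i, h⟩ = 0 := hL m _ (by simpa [Fin.lt_def] using Nat.lt_of_not_le hm)
    rw [h0, zero_mul]
    symm
    apply Finset.sum_eq_zero
    intro b hb
    rw [if_neg (by omega), zero_mul]
end

section
/- For a zero-mean Gaussian sample with sample covariance S, the negative log-likelihood parameterized by the standard Cholesky factor, ℓ(L) = tr(LᵗLS) − 2 log|L|, is jointly convex on the set of lower triangular matrices with positive diagonal entries for any symmetric positive semidefinite S. -/
/-!
On the lower triangular matrices with positive diagonal, `log det L = ∑ⱼ log Lⱼⱼ` is a sum of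
concave functions of single entries. The trace term is the quadratic form `L ↦ B(L, L)` of the
bilinear form `B(L, M) = tr(Lᵀ M S)`, which is positive semidefinite because
`tr(Lᵀ L S) = tr(L S Lᵀ)` and `L S Lᵀ ⪰ 0`; a positive semidefinite quadratic form is convex.
Hence `ℓ` is a convex function minus twice a concave one.
-/

open Matrix Set

theorem ConcaveOn.finset_sum {𝕜 E β ι : Type*} [Semiring 𝕜] [PartialOrder 𝕜]
    [AddCommMonoid E] [SMul 𝕜 E] [AddCommMonoid β] [PartialOrder β] [IsOrderedAddMonoid β]
    [Module 𝕜 β] {s : Set E} (hs : Convex 𝕜 s) (t : Finset ι) {f : ι → E → β}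
    (hf : ∀ i ∈ t, ConcaveOn 𝕜 s (f i)) : ConcaveOn 𝕜 s fun x => ∑ i ∈ t, f i x := by
  classical
  induction t using Finset.cons_induction with
  | empty => simpa using concaveOn_const (0 : β) hs
  | cons i t hi ih =>
    simp only [Finset.sum_cons]
    exact (hf i (Finset.mem_cons_self i t)).add (ih fun j hj => hf j (Finset.mem_cons_of_mem hj))

theorem LinearMap.convexOn_univ_apply_self {E : Type*} [AddCommGroup E] [Module ℝ E]
    (B : E →ₗ[ℝ] E →ₗ[ℝ] ℝ) (hB : ∀ v, 0 ≤ B v v) : ConvexOn ℝ univ fun x => B x x := by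
  refine ⟨convex_univ, fun x _ y _ a b ha hb hab => ?_⟩
  obtain rfl : b = 1 - a := by linarith
  have gap : a * B x x + (1 - a) * B y y - B (a • x + (1 - a) • y) (a • x + (1 - a) • y)
      = a * (1 - a) * B (x - y) (x - y) := by
    simp only [map_add, map_sub, map_smul, LinearMap.add_apply, LinearMap.sub_apply,
      LinearMap.smul_apply, smul_eq_mul]
    ring
  have := mul_nonneg (mul_nonneg ha hb) (hB (x - y))
  simp only [smul_eq_mul]
  linarith

section TraceForm

variable {m n : Type*} [Fintype m] [Fintype n] {S : Matrix n n ℝ}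

theorem trace_transpose_mul_self_mul_nonneg (hS : S.PosSemidef) (L : Matrix m n ℝ) :
    0 ≤ trace (Lᵀ * L * S) := by
  rw [Matrix.mul_assoc, trace_mul_comm, ← conjTranspose_eq_transpose_of_trivial]
  exact (hS.mul_mul_conjTranspose_same L).trace_nonneg

theorem convexOn_trace_transpose_mul_self_mul (hS : S.PosSemidef) :
    ConvexOn ℝ univ fun L : Matrix m n ℝ => trace (Lᵀ * L * S) :=
  (LinearMap.mk₂ ℝ (fun L M : Matrix m n ℝ => trace (Lᵀ * M * S))
    (fun _ _ _ => by simp only [transpose_add, Matrix.add_mul, trace_add])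
    (fun _ _ _ => by simp only [transpose_smul, Matrix.smul_mul, trace_smul])
    (fun _ _ _ => by simp only [Matrix.mul_add, Matrix.add_mul, trace_add])
    (fun _ _ _ => by simp only [Matrix.mul_smul, Matrix.smul_mul, trace_smul])
    ).convexOn_univ_apply_self (trace_transpose_mul_self_mul_nonneg hS)

end TraceForm

section LowerTriangular

variable (n : Type*) [LinearOrder n]

def lowerTriangularPosDiag : Set (Matrix n n ℝ) :=
  {L | (∀ i j : n, i < j → L i j = 0) ∧ ∀ j, 0 < L j j}

variable {n}

theorem convex_lowerTriangularPosDiag : Convex ℝ (lowerTriangularPosDiag n) := by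
  intro L hL M hM a b ha hb hab
  refine ⟨fun i j hij => ?_, fun j => ?_⟩
  · simp [hL.1 i j hij, hM.1 i j hij]
  · exact convex_Ioi (0 : ℝ) (hL.2 j) (hM.2 j) ha hb hab

theorem concaveOn_log_det_lowerTriangularPosDiag [Fintype n] :
    ConcaveOn ℝ (lowerTriangularPosDiag n) fun L => Real.log L.det := by
  have hlog_diag (j : n) : ConcaveOn ℝ (lowerTriangularPosDiag n) fun L => Real.log (L j j) :=
    (strictConcaveOn_log_Ioi.concaveOn.comp_linearMap (entryLinearMap ℝ ℝ j j)).subset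
      (fun L hL => hL.2 j) convex_lowerTriangularPosDiag
  refine (ConcaveOn.finset_sum convex_lowerTriangularPosDiag Finset.univ
    fun j _ => hlog_diag j).congr fun L hL => ?_
  rw [det_of_isLowerTriangular L hL.1, Real.log_prod fun j _ => (hL.2 j).ne']

end LowerTriangular

/-- The Gaussian negative log-likelihood in the standard Cholesky factor,
`ℓ(L) = tr(LᵗLS) − 2 log|L|`, is jointly convex on the set of lower triangular matrices
with positive diagonal entries, for any symmetric positive semidefinite `S`. -/
theorem cholesky_neg_loglik_convex (p : ℕ)
    (S : Matrix (Fin p) (Fin p) ℝ) (hS : S.PosSemidef) :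
    ConvexOn ℝ
      {L : Matrix (Fin p) (Fin p) ℝ | (∀ i j : Fin p, i < j → L i j = 0) ∧ ∀ j, 0 < L j j}
      (fun L => Matrix.trace (Lᵀ * L * S) - 2 * Real.log L.det) := by
  have hquad : ConvexOn ℝ (lowerTriangularPosDiag (Fin p)) fun L => trace (Lᵀ * L * S) :=
    (convexOn_trace_transpose_mul_self_mul hS).subset (subset_univ _)
      convex_lowerTriangularPosDiag
  exact hquad.sub (concaveOn_log_det_lowerTriangularPosDiag.smul zero_le_two)
end
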